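/- arXiv:2402.08746 — 3 statements merged into one kernel-verified Lean document; each statement's English description precedes it below -/
import Mathlib

section
/- In the reduction from ranking-based elections to approval elections, if the underlying multi-winner approval rule R is strongly GSP and Pareto-efficient, then the induced single-winner ranking-based rule T is strategyproof: no agent i of the ranking election can, by unilaterally misreporting her ranking, make T output an alternative she strictly prefers (ranks higher) than T's output under truthful reporting. -/
/-- Hamming distance between finite sets. -/
def hd {A : Type*} [DecidableEq A] (Q T : Finset A) : ℕ :=
  (Q \ T).card + (T \ Q).card

/-- A rule is unanimous if whenever all agents report the same size-`k` set `S`,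
the output is `S`. -/
def Unanimous {A ι : Type*} [DecidableEq A] (k : ℕ)
    (R : (ι → Finset A) → Finset A) : Prop :=
  ∀ S : Finset A, S.card = k → R (fun _ => S) = S

/-- Strong group-strategyproofness: no coalition can misreport so that, measured
from the true ballots, no member is worse off and some member is strictly better off. -/
def StronglyGSP {A ι : Type*} [DecidableEq A] [DecidableEq ι]
    (R : (ι → Finset A) → Finset A) : Prop :=
  ∀ (P P' : ι → Finset A) (S : Finset ι),
    (∀ i, i ∉ S → P' i = P i) →
    ¬ ((∀ i ∈ S, hd (P i) (R P') ≤ hd (P i) (R P)) ∧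
       (∃ i ∈ S, hd (P i) (R P') < hd (P i) (R P)))

/-- Pareto-efficiency: no size-`k` committee weakly improves every agent and
strictly improves some agent, compared to the rule's outcome. -/
def ParetoEfficient {A ι : Type*} [DecidableEq A] (k : ℕ)
    (R : (ι → Finset A) → Finset A) : Prop :=
  ∀ P : ι → Finset A,
    ¬ ∃ K' : Finset A, K'.card = k ∧
      (∀ i, hd (P i) K' ≤ hd (P i) (R P)) ∧
      (∃ i, hd (P i) K' < hd (P i) (R P))

/-- The set of `k-1` dummy alternatives inside `Fin m ⊕ Fin (k-1)`. -/
def dummies (m k : ℕ) : Finset (Fin m ⊕ Fin (k - 1)) :=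
  Finset.univ.image Sum.inr

/-- The approval profile constructed from a ranking profile `σ`, where `σ i t`
is the alternative ranked at position `t` by agent `i` (position `0` is the top).
Agent `(i, j)` (for `j : Fin (m-1)`, representing the index `j+1 ∈ [m-1]`)
approves the top `j+1` alternatives of `σ i` together with all dummies. -/
def redProfile {n m k : ℕ} (σ : Fin n → Equiv.Perm (Fin m)) :
    (Fin n × Fin (m - 1)) → Finset (Fin m ⊕ Fin (k - 1)) :=
  fun p =>
    ((Finset.univ.filter (fun t : Fin m => t.val ≤ p.2.val)).image
        (fun t => Sum.inl (σ p.1 t))) ∪ dummies m k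

/-! If agent `i` could move the winner from `a` to an alternative `b` she ranks strictly
higher, the coalition `{(i, j)}` of her approval agents would gain jointly in the approval
election. By cardinality both committees are a single alternative plus all dummies, and agent
`(i, j)` is at Hamming distance `j` from such a committee if its alternative is among her top
`j + 1` and at distance `j + 2` otherwise. So no `(i, j)` loses by the switch from `a` to `b`,
and `(i, j)` with `j` the position of `b` strictly gains, contradicting strong GSP. -/

lemma hd_union_union_of_disjoint {A : Type*} [DecidableEq A] {S T D : Finset A}
    (hS : Disjoint S D) (hT : Disjoint T D) : hd (S ∪ D) (T ∪ D) = hd S T := by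
  have key : ∀ {U V : Finset A}, Disjoint U D → (U ∪ D) \ (V ∪ D) = U \ V := by
    intro U V hU
    ext y
    have : y ∈ U → y ∉ D := fun h => Finset.disjoint_left.mp hU h
    simp only [Finset.mem_sdiff, Finset.mem_union]
    tauto
  rw [hd, hd, key hS, key hT]

lemma hd_singleton_of_mem {A : Type*} [DecidableEq A] {S : Finset A} {x : A} (hx : x ∈ S) :
    hd S {x} = S.card - 1 := by
  rw [hd, ← Finset.erase_eq, Finset.card_erase_of_mem hx,
    Finset.sdiff_eq_empty_iff_subset.mpr (Finset.singleton_subset_iff.mpr hx),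
    Finset.card_empty, add_zero]

lemma hd_singleton_of_notMem {A : Type*} [DecidableEq A] {S : Finset A} {x : A} (hx : x ∉ S) :
    hd S {x} = S.card + 1 := by
  rw [hd, ← Finset.erase_eq, Finset.erase_eq_of_notMem hx,
    Finset.sdiff_eq_self_of_disjoint (Finset.disjoint_singleton_left.mpr hx),
    Finset.card_singleton]

lemma card_dummies (m k : ℕ) : (dummies m k).card = k - 1 := by
  rw [dummies, Finset.card_image_of_injective _ Sum.inr_injective, Finset.card_univ,
    Fintype.card_fin]

lemma eq_insert_dummies_of_sdiff_eq_singleton {m k : ℕ} {K : Finset (Fin m ⊕ Fin (k - 1))}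
    {a : Fin m} (hK : K.card = k) (h : K \ dummies m k = {Sum.inl a}) :
    K = insert (Sum.inl a) (dummies m k) := by
  have hsplit := Finset.sdiff_union_inter K (dummies m k)
  have hcard := Finset.card_sdiff_add_card_inter K (dummies m k)
  rw [h, Finset.card_singleton, hK] at hcard
  have hdummies : K ∩ dummies m k = dummies m k :=
    Finset.eq_of_subset_of_card_le Finset.inter_subset_right (by rw [card_dummies]; omega)
  rw [← hsplit, h, hdummies, Finset.insert_eq]

def topAlternatives {m : ℕ} (k : ℕ) (τ : Equiv.Perm (Fin m)) (j : ℕ) :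
    Finset (Fin m ⊕ Fin (k - 1)) :=
  (Finset.univ.filter (fun t : Fin m => t.val ≤ j)).image (fun t => Sum.inl (τ t))

lemma redProfile_apply {n m k : ℕ} (σ : Fin n → Equiv.Perm (Fin m)) (i : Fin n)
    (j : Fin (m - 1)) :
    redProfile σ (i, j) = topAlternatives k (σ i) j ∪ dummies m k :=
  rfl

section topAlternatives

variable {m k : ℕ} (τ : Equiv.Perm (Fin m)) (j : ℕ)

lemma inl_mem_topAlternatives_iff (x : Fin m) :
    Sum.inl x ∈ topAlternatives k τ j ↔ (τ⁻¹ x).val ≤ j := by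
  simp only [topAlternatives, Finset.mem_image, Finset.mem_filter, Finset.mem_univ, true_and,
    Sum.inl.injEq]
  constructor
  · rintro ⟨t, ht, rfl⟩
    simpa using ht
  · exact fun h => ⟨τ⁻¹ x, h, by simp⟩

lemma card_topAlternatives (hj : j < m) : (topAlternatives k τ j).card = j + 1 := by
  rw [topAlternatives, Finset.card_image_of_injective _
    (fun s t hst => τ.injective (Sum.inl_injective hst))]
  have : Finset.univ.filter (fun t : Fin m => t.val ≤ j) = Finset.Iic ⟨j, hj⟩ := by
    ext t; simp [Fin.le_def]
  rw [this, Fin.card_Iic]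

lemma disjoint_topAlternatives_dummies : Disjoint (topAlternatives k τ j) (dummies m k) := by
  simp [Finset.disjoint_left, topAlternatives, dummies]

end topAlternatives

lemma hd_redProfile_insert_dummies {n m k : ℕ} (σ : Fin n → Equiv.Perm (Fin m)) (i : Fin n)
    (j : Fin (m - 1)) (x : Fin m) :
    hd (redProfile σ (i, j)) (insert (Sum.inl x) (dummies m k)) =
      if ((σ i)⁻¹ x).val ≤ j.val then j.val else j.val + 2 := by
  have hdisj : Disjoint ({Sum.inl x} : Finset (Fin m ⊕ Fin (k - 1))) (dummies m k) := by
    simp [dummies]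
  rw [redProfile_apply, Finset.insert_eq,
    hd_union_union_of_disjoint (disjoint_topAlternatives_dummies _ _) hdisj]
  have hcard := card_topAlternatives (k := k) (σ i) j (by omega)
  split_ifs with hx
  · rw [hd_singleton_of_mem ((inl_mem_topAlternatives_iff _ _ _).mpr hx), hcard,
      Nat.add_sub_cancel]
  · rw [hd_singleton_of_notMem (mt (inl_mem_topAlternatives_iff _ _ _).mp hx), hcard]

lemma hd_redProfile_le_of_lt {n m k : ℕ} (σ : Fin n → Equiv.Perm (Fin m)) (i : Fin n)
    {a b : Fin m} (hba : (σ i)⁻¹ b < (σ i)⁻¹ a) (j : Fin (m - 1)) :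
    hd (redProfile σ (i, j)) (insert (Sum.inl b) (dummies m k)) ≤
      hd (redProfile σ (i, j)) (insert (Sum.inl a) (dummies m k)) := by
  rw [hd_redProfile_insert_dummies, hd_redProfile_insert_dummies]
  rw [Fin.lt_def] at hba
  split_ifs <;> omega

lemma exists_hd_redProfile_lt_of_lt {n m k : ℕ} (σ : Fin n → Equiv.Perm (Fin m)) (i : Fin n)
    {a b : Fin m} (hba : (σ i)⁻¹ b < (σ i)⁻¹ a) :
    ∃ j : Fin (m - 1), hd (redProfile σ (i, j)) (insert (Sum.inl b) (dummies m k)) <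
      hd (redProfile σ (i, j)) (insert (Sum.inl a) (dummies m k)) := by
  rw [Fin.lt_def] at hba
  have hbm : ((σ i)⁻¹ b).val < m - 1 := by have := ((σ i)⁻¹ a).isLt; omega
  refine ⟨⟨_, hbm⟩, ?_⟩
  rw [hd_redProfile_insert_dummies, hd_redProfile_insert_dummies, if_pos le_rfl,
    if_neg (by simp only; omega)]
  omega

theorem induced_rule_strategyproof_general {n m k : ℕ}
    (R : ((Fin n × Fin (m - 1)) → Finset (Fin m ⊕ Fin (k - 1))) → Finset (Fin m ⊕ Fin (k - 1)))
    (hcard : ∀ P, (R P).card = k)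
    (hGSP : StronglyGSP R) :
    ∀ (σ σ' : Fin n → Equiv.Perm (Fin m)) (i : Fin n),
      (∀ i', i' ≠ i → σ' i' = σ i') →
      ∀ a b : Fin m,
        R (redProfile σ) \ dummies m k = {Sum.inl a} →
        R (redProfile σ') \ dummies m k = {Sum.inl b} →
        (σ i)⁻¹ a ≤ (σ i)⁻¹ b := by
  intro σ σ' i hσ' a b ha hb
  by_contra! hba
  have hRa := eq_insert_dummies_of_sdiff_eq_singleton (hcard _) ha
  have hRb := eq_insert_dummies_of_sdiff_eq_singleton (hcard _) hb
  refine hGSP (redProfile σ) (redProfile σ') (Finset.univ.filter (·.1 = i)) ?_ ⟨?_, ?_⟩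
  · rintro ⟨i', j⟩ hp
    simp only [Finset.mem_filter, Finset.mem_univ, true_and] at hp
    simp only [redProfile, hσ' i' hp]
  · rintro ⟨i', j⟩ hp
    obtain rfl : i' = i := by simpa using hp
    rw [hRa, hRb]
    exact hd_redProfile_le_of_lt σ i' hba j
  · obtain ⟨j, hj⟩ := exists_hd_redProfile_lt_of_lt (k := k) σ i hba
    exact ⟨(i, j), by simp, by rwa [hRa, hRb]⟩

/-- If `R` is strongly GSP and Pareto-efficient, the induced single-winner
ranking-based rule `T` is strategyproof: if agent `i` unilaterally misreports
her ranking (changing `σ` to `σ'`), the new winner `b` is not strictly preferred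
by `i` (i.e. not ranked higher in `σ i`) to the truthful winner `a`.
Here `(σ i)⁻¹ x` is the position of alternative `x` in agent `i`'s true ranking,
position `0` being the top. -/
theorem induced_rule_strategyproof {n m k : ℕ} (hn : 1 ≤ n) (hm : 2 ≤ m) (hk : 1 ≤ k)
    (R : ((Fin n × Fin (m - 1)) → Finset (Fin m ⊕ Fin (k - 1))) → Finset (Fin m ⊕ Fin (k - 1)))
    (hcard : ∀ P, (R P).card = k)
    (hGSP : StronglyGSP R) (hPE : ParetoEfficient k R) :
    ∀ (σ σ' : Fin n → Equiv.Perm (Fin m)) (i : Fin n),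
      (∀ i', i' ≠ i → σ' i' = σ i') →
      ∀ a b : Fin m,
        R (redProfile σ) \ dummies m k = {Sum.inl a} →
        R (redProfile σ') \ dummies m k = {Sum.inl b} →
        (σ i)⁻¹ a ≤ (σ i)⁻¹ b :=
  induced_rule_strategyproof_general R hcard hGSP
end

section
/- For approval elections with m ≥ 3 alternatives, k ∈ {1,…,m−2}, and n ≥ 6 agents, every strongly group-strategyproof multi-winner approval-based voting rule fails to achieve any finite approximation ratio for the k-minimax objective D(C,P) = max_i d(C,P_i). -/
/-- The minimax objective: the maximum Hamming distance of a committee `C`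
from the ballots of profile `P`. -/
def Dmax {A : Type*} [DecidableEq A] {n : ℕ}
    (C : Finset A) (P : Fin n → Finset A) : ℕ :=
  Finset.univ.sup (fun i => hd C (P i))

/-!
A rule that is not unanimous already fails at a unanimous profile, whose optimal minimax value is
`0`; so it suffices to show that no strongly GSP rule is unanimous. Such a rule is Pareto
efficient, since the grand coalition could switch to a dominating committee. Fix `k - 1`
alternatives `W` and three more `a, b, c`, and let three agents vote sets `W ∪ {x}` or
`W ∪ {x, y}` while everybody else votes `∅`. Then Pareto efficiency forces the outcome to be some
`W ∪ {x}`, and all Hamming distances are those of the case `W = ∅`, `k = 1`. There, coalition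
deviations between six profiles show that `(ab, b, a)` cannot elect `a`; exchanging `a` with `b`
and the last two agents, it cannot elect `b` either, while Pareto efficiency allows nothing else.
-/

open Finset

section Hamming

variable {A : Type*} [DecidableEq A]

theorem hd_add_two_mul_card_inter (X Y : Finset A) : hd X Y + 2 * #(X ∩ Y) = #X + #Y := by
  have hX := card_sdiff_add_card_inter X Y
  have hY := card_sdiff_add_card_inter Y X
  rw [inter_comm] at hY
  unfold hd
  omega

theorem hd_empty_left (X : Finset A) : hd ∅ X = #X := by simp [hd]

theorem hd_eq_zero_iff {X Y : Finset A} : hd X Y = 0 ↔ X = Y := by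
  simp only [hd, Nat.add_eq_zero_iff, card_eq_zero, sdiff_eq_empty_iff_subset]
  exact subset_antisymm_iff.symm

end Hamming

section Strategyproofness

variable {A ι : Type*} [DecidableEq A] [DecidableEq ι] [Fintype ι]
  {R : (ι → Finset A) → Finset A}

/-- The coalition of all agents who weakly gain is a witness against strong GSP. -/
theorem StronglyGSP.false_of_improvement (hR : StronglyGSP R) {P P' : ι → Finset A}
    (hweak : ∀ i, P' i = P i ∨ hd (P i) (R P') ≤ hd (P i) (R P))
    (hstrict : ∃ i, hd (P i) (R P') < hd (P i) (R P)) : False := by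
  refine hR P P' (univ.filter fun i => hd (P i) (R P') ≤ hd (P i) (R P))
    (fun i hi => (hweak i).resolve_right fun h => hi (mem_filter.2 ⟨mem_univ i, h⟩))
    ⟨fun i hi => (mem_filter.1 hi).2, ?_⟩
  obtain ⟨i, hi⟩ := hstrict
  exact ⟨i, mem_filter.2 ⟨mem_univ i, hi.le⟩, hi⟩

theorem StronglyGSP.paretoEfficient (hR : StronglyGSP R) {k : ℕ} (hU : Unanimous k R) :
    ParetoEfficient k R := by
  rintro P ⟨K, hK, hweak, hstrict⟩
  have hRK : R (fun _ => K) = K := hU K hK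
  refine hR.false_of_improvement (P := P) (P' := fun _ => K) (fun i => Or.inr ?_) ?_
  · rw [hRK]; exact hweak i
  · rw [hRK]; exact hstrict

end Strategyproofness

section ThreeProfile

variable {A ι : Type*} [DecidableEq ι] {ag : Fin 3 ↪ ι} {X Y Z X' Y' Z' : Finset A}

/-- Agents reporting `∅` are indifferent between all committees of equal size. -/
def threeProfile (ag : Fin 3 ↪ ι) (X Y Z : Finset A) : ι → Finset A := fun t =>
  if t = ag 0 then X else if t = ag 1 then Y else if t = ag 2 then Z else ∅

theorem threeProfile_apply_zero : threeProfile ag X Y Z (ag 0) = X := if_pos rfl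

theorem threeProfile_apply_one : threeProfile ag X Y Z (ag 1) = Y := by
  simp [threeProfile, ag.injective.ne (show (1 : Fin 3) ≠ 0 by decide)]

theorem threeProfile_apply_two : threeProfile ag X Y Z (ag 2) = Z := by
  simp [threeProfile, ag.injective.ne (show (2 : Fin 3) ≠ 0 by decide),
    ag.injective.ne (show (2 : Fin 3) ≠ 1 by decide)]

theorem threeProfile_forall {p : Finset A → Prop} (hX : p X) (hY : p Y) (hZ : p Z) (h : p ∅) :
    ∀ t, p (threeProfile ag X Y Z t) := by
  intro t
  unfold threeProfile
  split_ifs <;> assumption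

theorem threeProfile_forall₂ {p : Finset A → Finset A → Prop} (hX : p X X') (hY : p Y Y')
    (hZ : p Z Z') (h : p ∅ ∅) : ∀ t, p (threeProfile ag X Y Z t) (threeProfile ag X' Y' Z' t) := by
  intro t
  unfold threeProfile
  split_ifs <;> assumption

theorem threeProfile_swap :
    threeProfile ((Equiv.swap 1 2).toEmbedding.trans ag) X Z Y = threeProfile ag X Y Z := by
  funext t
  have h₁₂ := ag.injective.ne (show (1 : Fin 3) ≠ 2 by decide)
  simp only [threeProfile, Function.Embedding.trans_apply, Equiv.coe_toEmbedding, Fin.isValue,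
    ne_eq, zero_ne_one, not_false_eq_true, Fin.reduceEq, Equiv.swap_apply_of_ne_of_ne,
    Equiv.swap_apply_left, Equiv.swap_apply_right]
  split_ifs <;> simp_all

end ThreeProfile

/-- Committees `base ∪ {x}` and ballots `base ∪ {x, y}` behave, for Hamming distances, exactly
like committees `{x}` and ballots `{x, y}` over the three alternatives `Fin 3`. -/
structure Frame (A : Type*) where
  base : Finset A
  letter : Fin 3 ↪ A
  disjoint : Disjoint base (univ.map letter)

namespace Frame

variable {A : Type*} (c : Frame A)

theorem letter_notMem_base (x : Fin 3) : c.letter x ∉ c.base :=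
  disjoint_right.1 c.disjoint (mem_map_of_mem _ (mem_univ x))

variable [DecidableEq A]

def lift (β : Finset (Fin 3)) : Finset A := c.base ∪ β.map c.letter

def trace (C : Finset A) : Finset (Fin 3) := univ.filter (c.letter · ∈ C)

theorem card_lift (β : Finset (Fin 3)) : #(c.lift β) = #c.base + #β := by
  rw [lift, card_union_of_disjoint (c.disjoint.mono_right (map_subset_map.2 (subset_univ β))),
    card_map]

theorem card_lift_inter (β : Finset (Fin 3)) (C : Finset A) :
    #(c.lift β ∩ C) = #(c.base ∩ C) + #(β ∩ c.trace C) := by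
  have hmap : β.map c.letter ∩ C = (β ∩ c.trace C).map c.letter := by
    ext a
    simp only [mem_inter, mem_map, trace, mem_filter, mem_univ, true_and]
    constructor
    · rintro ⟨⟨x, hx, rfl⟩, hC⟩
      exact ⟨x, ⟨hx, hC⟩, rfl⟩
    · rintro ⟨x, ⟨hx, hC⟩, rfl⟩
      exact ⟨⟨x, hx, rfl⟩, hC⟩
  rw [lift, union_inter_distrib_right, card_union_of_disjoint, hmap, card_map]
  exact (c.disjoint.mono_right (map_subset_map.2 (subset_univ β))).mono inter_subset_left
    inter_subset_left

theorem hd_lift_add_card_trace (β : Finset (Fin 3)) (C : Finset A) :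
    hd (c.lift β) C + #(c.trace C) = hd β (c.trace C) + hd c.base C := by
  have hL := hd_add_two_mul_card_inter (c.lift β) C
  have hβ := hd_add_two_mul_card_inter β (c.trace C)
  have hW := hd_add_two_mul_card_inter c.base C
  rw [card_lift_inter, card_lift] at hL
  omega

theorem trace_lift (β : Finset (Fin 3)) : c.trace (c.lift β) = β := by
  ext x
  simp [trace, lift, c.letter_notMem_base]

theorem hd_base_lift (β : Finset (Fin 3)) : hd c.base (c.lift β) = #β := by
  have h := hd_add_two_mul_card_inter c.base (c.lift β)
  rw [inter_eq_left.2 (show c.base ⊆ c.lift β from subset_union_left), card_lift] at h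
  omega

theorem hd_lift_lift (β γ : Finset (Fin 3)) : hd (c.lift β) (c.lift γ) = hd β γ := by
  have h := c.hd_lift_add_card_trace β (c.lift γ)
  rw [trace_lift, hd_base_lift] at h
  omega

variable {c} {C : Finset A}

theorem exists_hd_base_eq (hC : #C = #c.base + 1) :
    ∃ r, hd c.base C = 2 * r + 1 ∧ #(c.trace C) ≤ r + 1 := by
  have hW := hd_add_two_mul_card_inter c.base C
  have hinter := c.card_lift_inter (c.trace C) C
  rw [inter_self] at hinter
  have hle : #(c.lift (c.trace C) ∩ C) ≤ #C := card_le_card inter_subset_right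
  have hWle : #(c.base ∩ C) ≤ #c.base := card_le_card inter_subset_left
  exact ⟨#c.base - #(c.base ∩ C), by omega, by omega⟩

theorem eq_lift_of_hd_base_eq_one (hC : #C = #c.base + 1) (h : hd c.base C = 1) {x : Fin 3}
    (hx : c.trace C = {x}) : C = c.lift {x} := by
  have hW := hd_add_two_mul_card_inter c.base C
  have hinter := c.card_lift_inter {x} C
  rw [hx, inter_self, card_singleton] at hinter
  have hsub : c.lift {x} ∩ C = c.lift {x} :=
    eq_of_subset_of_card_le inter_subset_left (by rw [card_lift, card_singleton]; omega)
  rw [← hsub]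
  exact (eq_of_subset_of_card_le inter_subset_right (by omega)).symm

end Frame

section Codes

/-- The committee `{x}` Pareto-dominates, for the ballots `β₁ β₂ β₃`, a committee with trace `τ`
at distance `h` from the base: by `Frame.hd_lift_add_card_trace` the lifted ballot `β` is at
distance `hd β τ + h - #τ` from such a committee. -/
def CodeDominates (β₁ β₂ β₃ : Finset (Fin 3)) (x : Fin 3) (τ : Finset (Fin 3)) (h : ℕ) : Prop :=
  (hd β₁ {x} + #τ ≤ hd β₁ τ + h ∧ hd β₂ {x} + #τ ≤ hd β₂ τ + h ∧
    hd β₃ {x} + #τ ≤ hd β₃ τ + h) ∧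
  (hd β₁ {x} + #τ < hd β₁ τ + h ∨ hd β₂ {x} + #τ < hd β₂ τ + h ∨
    hd β₃ {x} + #τ < hd β₃ τ + h)

instance (β₁ β₂ β₃ : Finset (Fin 3)) (x : Fin 3) (τ : Finset (Fin 3)) (h : ℕ) :
    Decidable (CodeDominates β₁ β₂ β₃ x τ h) := by
  unfold CodeDominates; infer_instance

/-- Every committee that no `{x}` dominates is some `{x}` with `x ∈ allowed`. Only distances
`h = 2 * r + 1 < 7` need checking: beyond, every `{x}` dominates. -/
def UndominatedWithin (β₁ β₂ β₃ allowed : Finset (Fin 3)) : Prop :=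
  ∀ τ : Finset (Fin 3), ∀ r : Fin 3, #τ ≤ (r : ℕ) + 1 →
    (∀ x, ¬ CodeDominates β₁ β₂ β₃ x τ (2 * (r : ℕ) + 1)) → r = 0 ∧ ∃ x ∈ allowed, τ = {x}

instance (β₁ β₂ β₃ allowed : Finset (Fin 3)) :
    Decidable (UndominatedWithin β₁ β₂ β₃ allowed) := by
  unfold UndominatedWithin; infer_instance

/-- If the ballots `βᵢ` elect `{u}` and the ballots `βᵢ'` elect `{v}`, the agents who change
their ballot, together with those preferring `{v}`, gain by the change. -/
def CodeImproves (β₁ β₂ β₃ β₁' β₂' β₃' : Finset (Fin 3)) (u v : Fin 3) : Prop :=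
  (β₁' = β₁ ∨ hd β₁ {v} ≤ hd β₁ {u}) ∧ (β₂' = β₂ ∨ hd β₂ {v} ≤ hd β₂ {u}) ∧
    (β₃' = β₃ ∨ hd β₃ {v} ≤ hd β₃ {u}) ∧
    (hd β₁ {v} < hd β₁ {u} ∨ hd β₂ {v} < hd β₂ {u} ∨ hd β₃ {v} < hd β₃ {u})

instance (β₁ β₂ β₃ β₁' β₂' β₃' : Finset (Fin 3)) (u v : Fin 3) :
    Decidable (CodeImproves β₁ β₂ β₃ β₁' β₂' β₃' u v) := by
  unfold CodeImproves; infer_instance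

theorem hd_singleton_le_three : ∀ (β : Finset (Fin 3)) (x : Fin 3), hd β {x} ≤ 3 := by decide

end Codes

namespace Frame

variable {A ι : Type*} [DecidableEq A] [DecidableEq ι]
  {R : (ι → Finset A) → Finset A} {k : ℕ} (c : Frame A) {ag : Fin 3 ↪ ι}
  {β₁ β₂ β₃ β₁' β₂' β₃' : Finset (Fin 3)}

theorem exists_outcome (hPar : ParetoEfficient k R) (hcard : ∀ P, #(R P) = k)
    (hk : #c.base + 1 = k) {allowed : Finset (Fin 3)}
    (hcheck : UndominatedWithin β₁ β₂ β₃ allowed) :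
    ∃ x ∈ allowed, R (threeProfile ag (c.lift β₁) (c.lift β₂) (c.lift β₃)) = c.lift {x} := by
  set P := threeProfile ag (c.lift β₁) (c.lift β₂) (c.lift β₃) with hP
  have hC : #(R P) = #c.base + 1 := by rw [hcard, hk]
  obtain ⟨r, hr, hτ⟩ := exists_hd_base_eq hC
  have hdist := fun β => c.hd_lift_add_card_trace β (R P)
  have undominated : ∀ x, ¬ CodeDominates β₁ β₂ β₃ x (c.trace (R P)) (2 * r + 1) := by
    rintro x ⟨⟨h₁, h₂, h₃⟩, hstrict⟩
    have hle : ∀ β, hd β {x} + #(c.trace (R P)) ≤ hd β (c.trace (R P)) + (2 * r + 1) →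
        hd (c.lift β) (c.lift {x}) ≤ hd (c.lift β) (R P) := fun β h => by
      have := hdist β; rw [hd_lift_lift]; omega
    have hlt : ∀ β, hd β {x} + #(c.trace (R P)) < hd β (c.trace (R P)) + (2 * r + 1) →
        hd (c.lift β) (c.lift {x}) < hd (c.lift β) (R P) := fun β h => by
      have := hdist β; rw [hd_lift_lift]; omega
    refine hPar P ⟨c.lift {x}, by rw [card_lift, card_singleton, hk],
      threeProfile_forall (p := fun B => hd B (c.lift {x}) ≤ hd B (R P))
        (hle β₁ h₁) (hle β₂ h₂) (hle β₃ h₃) ?_, ?_⟩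
    · rw [hd_empty_left, hd_empty_left, card_lift, card_singleton, hC]
    · rcases hstrict with h | h | h
      · exact ⟨ag 0, by rw [hP, threeProfile_apply_zero]; exact hlt β₁ h⟩
      · exact ⟨ag 1, by rw [hP, threeProfile_apply_one]; exact hlt β₂ h⟩
      · exact ⟨ag 2, by rw [hP, threeProfile_apply_two]; exact hlt β₃ h⟩
  have hr3 : r < 3 := by
    by_contra! hr3
    have hτ3 : #(c.trace (R P)) ≤ 3 := card_le_univ _
    have := hd_singleton_le_three β₁ 0
    have := hd_singleton_le_three β₂ 0
    have := hd_singleton_le_three β₃ 0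
    exact undominated 0 ⟨⟨by omega, by omega, by omega⟩, Or.inl (by omega)⟩
  obtain ⟨hr0, x, hx, hτx⟩ := hcheck (c.trace (R P)) ⟨r, hr3⟩ hτ undominated
  replace hr0 : r = 0 := congrArg Fin.val hr0
  exact ⟨x, hx, eq_lift_of_hd_base_eq_one hC (by omega) hτx⟩

theorem outcome_eq_of_ne (hPar : ParetoEfficient k R) (hcard : ∀ P, #(R P) = k)
    (hk : #c.base + 1 = k) {u v : Fin 3} (hcheck : UndominatedWithin β₁ β₂ β₃ {u, v})
    (hv : R (threeProfile ag (c.lift β₁) (c.lift β₂) (c.lift β₃)) ≠ c.lift {v}) :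
    R (threeProfile ag (c.lift β₁) (c.lift β₂) (c.lift β₃)) = c.lift {u} := by
  obtain ⟨x, hx, h⟩ := c.exists_outcome hPar hcard hk hcheck
  rcases mem_insert.1 hx with rfl | hx
  · exact h
  · exact absurd (mem_singleton.1 hx ▸ h) hv

theorem outcome_eq_of_ne_of_ne (hPar : ParetoEfficient k R) (hcard : ∀ P, #(R P) = k)
    (hk : #c.base + 1 = k) {u v w : Fin 3} (hcheck : UndominatedWithin β₁ β₂ β₃ {u, v, w})
    (hv : R (threeProfile ag (c.lift β₁) (c.lift β₂) (c.lift β₃)) ≠ c.lift {v})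
    (hw : R (threeProfile ag (c.lift β₁) (c.lift β₂) (c.lift β₃)) ≠ c.lift {w}) :
    R (threeProfile ag (c.lift β₁) (c.lift β₂) (c.lift β₃)) = c.lift {u} := by
  obtain ⟨x, hx, h⟩ := c.exists_outcome hPar hcard hk hcheck
  simp only [mem_insert, mem_singleton] at hx
  rcases hx with rfl | rfl | rfl
  exacts [h, absurd h hv, absurd h hw]

variable [Fintype ι]

theorem not_codeImproves (hR : StronglyGSP R) {u v : Fin 3}
    (hP : R (threeProfile ag (c.lift β₁) (c.lift β₂) (c.lift β₃)) = c.lift {u})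
    (hP' : R (threeProfile ag (c.lift β₁') (c.lift β₂') (c.lift β₃')) = c.lift {v}) :
    ¬ CodeImproves β₁ β₂ β₃ β₁' β₂' β₃' u v := by
  rintro ⟨h₁, h₂, h₃, hstrict⟩
  have slot : ∀ {β β' : Finset (Fin 3)}, (β' = β ∨ hd β {v} ≤ hd β {u}) →
      c.lift β' = c.lift β ∨ hd (c.lift β) (c.lift {v}) ≤ hd (c.lift β) (c.lift {u}) := by
    intro β β' h
    rw [hd_lift_lift, hd_lift_lift]
    exact h.imp (congrArg c.lift) id
  refine hR.false_of_improvement (P := threeProfile ag (c.lift β₁) (c.lift β₂) (c.lift β₃))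
    (P' := threeProfile ag (c.lift β₁') (c.lift β₂') (c.lift β₃')) ?_ ?_ <;> rw [hP, hP']
  · exact threeProfile_forall₂
      (p := fun B B' => B' = B ∨ hd B (c.lift {v}) ≤ hd B (c.lift {u}))
      (slot h₁) (slot h₂) (slot h₃) (Or.inl rfl)
  · rcases hstrict with h | h | h
    · exact ⟨ag 0, by rwa [threeProfile_apply_zero, hd_lift_lift, hd_lift_lift]⟩
    · exact ⟨ag 1, by rwa [threeProfile_apply_one, hd_lift_lift, hd_lift_lift]⟩
    · exact ⟨ag 2, by rwa [threeProfile_apply_two, hd_lift_lift, hd_lift_lift]⟩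

/-- With letters `a b c` for `0 1 2`: if `(ab, b, a)` elected `a`, the outcomes of
`(bc, ab, a)`, `(bc, ac, ab)`, `(bc, c, ab)`, `(bc, ac, b)` would be forced to `a, a, b, c`,
leaving no admissible outcome for `(bc, c, b)`. -/
theorem outcome_ne (hR : StronglyGSP R) (hU : Unanimous k R) (hcard : ∀ P, #(R P) = k)
    (hk : #c.base + 1 = k) (ag : Fin 3 ↪ ι) :
    R (threeProfile ag (c.lift {0, 1}) (c.lift {1}) (c.lift {0})) ≠ c.lift {0} := by
  have hPar := hR.paretoEfficient hU
  intro h₁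
  have h₂ : R (threeProfile ag (c.lift {1, 2}) (c.lift {0, 1}) (c.lift {0})) = c.lift {0} :=
    c.outcome_eq_of_ne hPar hcard hk (v := 1) (by decide)
      fun h => c.not_codeImproves hR h₁ h (by decide)
  have h₃ : R (threeProfile ag (c.lift {1, 2}) (c.lift {0, 2}) (c.lift {0, 1})) = c.lift {0} :=
    c.outcome_eq_of_ne_of_ne hPar hcard hk (v := 1) (w := 2) (by decide)
      (fun h => c.not_codeImproves hR h h₂ (by decide))
      (fun h => c.not_codeImproves hR h h₂ (by decide))
  have h₄ : R (threeProfile ag (c.lift {1, 2}) (c.lift {2}) (c.lift {0, 1})) = c.lift {1} :=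
    c.outcome_eq_of_ne hPar hcard hk (v := 2) (by decide)
      fun h => c.not_codeImproves hR h₃ h (by decide)
  have h₅ : R (threeProfile ag (c.lift {1, 2}) (c.lift {0, 2}) (c.lift {1})) = c.lift {2} :=
    c.outcome_eq_of_ne hPar hcard hk (v := 1) (by decide)
      fun h => c.not_codeImproves hR h₃ h (by decide)
  have h₆ : R (threeProfile ag (c.lift {1, 2}) (c.lift {2}) (c.lift {1})) = c.lift {1} :=
    c.outcome_eq_of_ne hPar hcard hk (v := 2) (by decide)
      fun h => c.not_codeImproves hR h h₄ (by decide)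
  exact c.not_codeImproves hR h₆ h₅ (by decide)

def swap : Frame A where
  base := c.base
  letter := (Equiv.swap 0 1).toEmbedding.trans c.letter
  disjoint := by rw [← map_map, map_univ_equiv]; exact c.disjoint

theorem swap_lift (β : Finset (Fin 3)) :
    c.swap.lift β = c.lift (β.map (Equiv.swap 0 1).toEmbedding) := by
  simp only [lift, swap, map_map]

theorem not_unanimous (hR : StronglyGSP R) (hcard : ∀ P, #(R P) = k) (hk : #c.base + 1 = k)
    (ag : Fin 3 ↪ ι) : ¬ Unanimous k R := by
  intro hU
  have hne₀ := c.outcome_ne hR hU hcard hk ag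
  have hne₁ := c.swap.outcome_ne hR hU hcard hk ((Equiv.swap 1 2).toEmbedding.trans ag)
  rw [swap_lift, swap_lift, swap_lift, threeProfile_swap,
    show ({0, 1} : Finset (Fin 3)).map (Equiv.swap 0 1).toEmbedding = {0, 1} by decide,
    show ({0} : Finset (Fin 3)).map (Equiv.swap 0 1).toEmbedding = {1} by decide,
    show ({1} : Finset (Fin 3)).map (Equiv.swap 0 1).toEmbedding = {0} by decide] at hne₁
  exact hne₁ (c.outcome_eq_of_ne (hR.paretoEfficient hU) hcard hk (by decide) hne₀)

theorem exists_card_base [Fintype A] {j : ℕ} (hj : j + 3 ≤ Fintype.card A) :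
    ∃ c : Frame A, #c.base = j := by
  obtain ⟨e⟩ := Function.Embedding.nonempty_of_card_le
    (show Fintype.card (Fin 3) ≤ Fintype.card A by rw [Fintype.card_fin]; omega)
  obtain ⟨W, hW, hWj⟩ := exists_subset_card_eq (s := (univ.map e)ᶜ) (n := j)
    (by rw [card_compl, card_map, card_univ, Fintype.card_fin]; omega)
  exact ⟨⟨W, e, disjoint_of_subset_left hW disjoint_compl_left⟩, hWj⟩

end Frame

theorem Dmax_const {A : Type*} [DecidableEq A] {n : ℕ} (hn : 0 < n) (C S : Finset A) :
    Dmax C (fun _ : Fin n => S) = hd C S :=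
  sup_const (univ_nonempty_iff.2 ⟨⟨0, hn⟩⟩) _

theorem exists_ratio_gt_of_not_unanimous {A : Type*} [DecidableEq A] {n k : ℕ} (hn : 0 < n)
    {R : (Fin n → Finset A) → Finset A} (hU : ¬ Unanimous k R) (ρ : ℝ) :
    ∃ P : Fin n → Finset A, ∀ Kmin : Finset A, #Kmin = k →
      (∀ K : Finset A, #K = k → Dmax Kmin P ≤ Dmax K P) →
      (Dmax (R P) P : ℝ) > ρ * (Dmax Kmin P : ℝ) := by
  obtain ⟨S, hS, hRS⟩ : ∃ S : Finset A, #S = k ∧ R (fun _ => S) ≠ S := by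
    simpa [Unanimous] using hU
  refine ⟨fun _ => S, fun K _ hKopt => ?_⟩
  have hK : Dmax K (fun _ : Fin n => S) = 0 := by
    simpa [Dmax_const hn, hd_eq_zero_iff.2 rfl] using hKopt S hS
  have hpos : 0 < Dmax (R fun _ => S) (fun _ : Fin n => S) := by
    rw [Dmax_const hn]
    exact Nat.pos_of_ne_zero (hd_eq_zero_iff.not.2 hRS)
  rw [hK, Nat.cast_zero, mul_zero]
  exact_mod_cast hpos

theorem sgsp_unbounded_minimax_general {A : Type*} [Fintype A] [DecidableEq A]
    {m n k : ℕ} (hmA : Fintype.card A = m)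
    (hk1 : 1 ≤ k) (hk2 : k ≤ m - 2) (hn : 6 ≤ n)
    (R : (Fin n → Finset A) → Finset A)
    (hcard : ∀ P, (R P).card = k)
    (hGSP : StronglyGSP R) :
    ∀ ρ : ℝ, 1 ≤ ρ →
      ∃ P : Fin n → Finset A,
        ∀ Kmin : Finset A, Kmin.card = k →
          (∀ K : Finset A, K.card = k → Dmax Kmin P ≤ Dmax K P) →
          (Dmax (R P) P : ℝ) > ρ * (Dmax Kmin P : ℝ) := by
  intro ρ _
  have hU : ¬ Unanimous k R := by
    obtain ⟨c, hc⟩ := Frame.exists_card_base (A := A) (j := k - 1) (by omega)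
    exact c.not_unanimous hGSP hcard (by omega) (Fin.castLEEmb (by omega))
  exact exists_ratio_gt_of_not_unanimous (by omega) hU ρ

/-- For approval elections with `m ≥ 3` alternatives, `1 ≤ k ≤ m - 2`, and
`n ≥ 6` agents, every strongly GSP multi-winner approval-based voting rule
fails to achieve any finite approximation ratio for `k`-minimax: for every
`ρ ≥ 1` there is a profile `P` with `D(R(P),P) > ρ · min_K D(K,P)`. -/
theorem sgsp_unbounded_minimax {A : Type*} [Fintype A] [DecidableEq A]
    {m n k : ℕ} (hmA : Fintype.card A = m) (hm : 3 ≤ m)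
    (hk1 : 1 ≤ k) (hk2 : k ≤ m - 2) (hn : 6 ≤ n)
    (R : (Fin n → Finset A) → Finset A)
    (hcard : ∀ P, (R P).card = k)
    (hGSP : StronglyGSP R) :
    ∀ ρ : ℝ, 1 ≤ ρ →
      ∃ P : Fin n → Finset A,
        ∀ Kmin : Finset A, Kmin.card = k →
          (∀ K : Finset A, K.card = k → Dmax Kmin P ≤ Dmax K P) →
          (Dmax (R P) P : ℝ) > ρ * (Dmax Kmin P : ℝ) :=
  sgsp_unbounded_minimax_general hmA hk1 hk2 hn R hcard hGSP
end

section
/- If a randomized mechanism M for binary classification with shared inputs is a mixture of deterministic strongly GSP mechanisms corresponding (under the identification of k-positive classifiers with size-k committees and labelings with approval ballots) to non-unanimous multi-winner voting rules, then M has unbounded approximation ratio for the global risk: for every ρ ≥ 1 there is a dataset Y with E[L(M(Y,w),Y,w)] > ρ · min_{h∈H} L(h,Y,w). -/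
/-- The global risk of a classifier (identified with the size-`k` set of points
it labels `+`) for a dataset `Y` (each `Y i` is the set of points labeled `+`
by agent `i`) with agent weights `w`: `L(h,Y,w) = Σ_i w_i · ℓ_i(h,Y_i)`, where
`ℓ_i` is the Hamming distance between the labelings. -/
def riskL {A : Type*} [Fintype A] [DecidableEq A] {n : ℕ}
    (w : Fin n → ℝ) (Y : Fin n → Finset A) (h : Finset A) : ℝ :=
  ∑ i, w i * (hd (Y i) h : ℝ)

theorem hd_eq_zero_iff_s19 {A : Type*} [DecidableEq A] {Q T : Finset A} : hd Q T = 0 ↔ Q = T := by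
  simp only [hd, Nat.add_eq_zero_iff, Finset.card_eq_zero, Finset.sdiff_eq_empty_iff_subset]
  exact Finset.Subset.antisymm_iff.symm

theorem hd_self {A : Type*} [DecidableEq A] (Q : Finset A) : hd Q Q = 0 :=
  hd_eq_zero_iff_s19.2 rfl

theorem riskL_const {A : Type*} [Fintype A] [DecidableEq A] {n : ℕ} {w : Fin n → ℝ}
    (hwsum : ∑ i, w i = 1) (S h : Finset A) : riskL w (fun _ => S) h = hd S h := by
  rw [riskL, ← Finset.sum_mul, hwsum, one_mul]

theorem randomized_classification_unbounded_general
    {A : Type*} [Fintype A] [DecidableEq A]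
    {n k s : ℕ}
    (w : Fin n → ℝ) (hwsum : ∑ i, w i = 1)
    (μ : Fin s → ℝ) (hμ : ∀ t, 0 ≤ μ t) (hμsum : ∑ t, μ t = 1)
    (R : Fin s → (Fin n → Finset A) → Finset A)
    (hNonUnan : ∀ t, ¬ Unanimous k (R t)) :
    ∀ ρ : ℝ, 1 ≤ ρ →
      ∃ Y : Fin n → Finset A,
        ∀ hOpt : Finset A, hOpt.card = k →
          (∀ h : Finset A, h.card = k → riskL w Y hOpt ≤ riskL w Y h) →
          (∑ t, μ t * riskL w Y (R t Y)) > ρ * riskL w Y hOpt := by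
  intro ρ _
  obtain ⟨t₀, -, hμt₀⟩ := Finset.exists_ne_zero_of_sum_ne_zero (hμsum ▸ one_ne_zero)
  obtain ⟨S, hSk, hRS⟩ : ∃ S : Finset A, S.card = k ∧ R t₀ (fun _ => S) ≠ S := by
    simpa [Unanimous] using hNonUnan t₀
  refine ⟨fun _ => S, fun hOpt _ hOptmin => ?_⟩
  have hOpt_zero : riskL w (fun _ => S) hOpt = 0 := by
    have := hOptmin S hSk
    rw [riskL_const hwsum, riskL_const hwsum, hd_self, Nat.cast_zero, Nat.cast_nonpos] at this
    rw [riskL_const hwsum, this, Nat.cast_zero]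
  rw [hOpt_zero, mul_zero]
  simp only [riskL_const hwsum]
  refine Finset.sum_pos' (fun t _ => mul_nonneg (hμ t) (Nat.cast_nonneg _))
    ⟨t₀, Finset.mem_univ _, mul_pos ((hμ t₀).lt_of_ne' hμt₀) ?_⟩
  exact Nat.cast_pos.2 (Nat.pos_of_ne_zero fun h => hRS (hd_eq_zero_iff_s19.1 h).symm)

/-- A randomized classification mechanism that is a mixture (with probabilities
`μ t`) of deterministic strongly GSP mechanisms corresponding to non-unanimous
multi-winner voting rules has unbounded approximation ratio for the global
risk: for every `ρ ≥ 1` there is a dataset `Y` whose expected risk exceeds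
`ρ` times the minimum risk over the concept class of `k`-positive classifiers. -/
theorem randomized_classification_unbounded
    {A : Type*} [Fintype A] [DecidableEq A]
    {m n k s : ℕ} (hmA : Fintype.card A = m) (hm : 3 ≤ m)
    (hk1 : 1 ≤ k) (hk2 : k ≤ m - 2) (hn : 1 ≤ n)
    (w : Fin n → ℝ) (hw : ∀ i, 0 < w i) (hwsum : ∑ i, w i = 1)
    (μ : Fin s → ℝ) (hμ : ∀ t, 0 ≤ μ t) (hμsum : ∑ t, μ t = 1)
    (R : Fin s → (Fin n → Finset A) → Finset A)
    (hcard : ∀ t P, (R t P).card = k)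
    (hGSP : ∀ t, StronglyGSP (R t))
    (hNonUnan : ∀ t, ¬ Unanimous k (R t)) :
    ∀ ρ : ℝ, 1 ≤ ρ →
      ∃ Y : Fin n → Finset A,
        ∀ hOpt : Finset A, hOpt.card = k →
          (∀ h : Finset A, h.card = k → riskL w Y hOpt ≤ riskL w Y h) →
          (∑ t, μ t * riskL w Y (R t Y)) > ρ * riskL w Y hOpt :=
  randomized_classification_unbounded_general w hwsum μ hμ hμsum R hNonUnan
end
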